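/- arXiv:2302.10498 — 3 statements merged into one kernel-verified Lean document; each statement's English description precedes it below -/
import Mathlib

section
/- Let P and P' be n×n real positive semidefinite matrices with P ⪯ P', let R be an m×m positive definite matrix, C an m×n matrix, A an n×n matrix, and Q an n×n positive semidefinite matrix. Define the Riccati map f(S) = A (S − S Cᵀ (C S Cᵀ + R)⁻¹ C S) Aᵀ + Q. Then f(P) ⪯ f(P'), i.e., the one-step Riccati update is monotone with respect to the Loewner order. -/
open Matrix

/-- The one-step Riccati map
`f(S) = A (S − S Cᵀ (C S Cᵀ + R)⁻¹ C S) Aᵀ + Q`. -/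
noncomputable def riccatiMap {n m : ℕ}
    (A Q : Matrix (Fin n) (Fin n) ℝ)
    (C : Matrix (Fin m) (Fin n) ℝ) (R : Matrix (Fin m) (Fin m) ℝ)
    (S : Matrix (Fin n) (Fin n) ℝ) : Matrix (Fin n) (Fin n) ℝ :=
  A * (S - S * Cᵀ * (C * S * Cᵀ + R)⁻¹ * (C * S)) * Aᵀ + Q

/-!
The update `S ↦ S - S Cᴴ (C S Cᴴ + R)⁻¹ C S` is the pointwise minimum over gains `L` of the
Joseph forms `(1 - L C) S (1 - L C)ᴴ + L R Lᴴ`, which are monotone in `S`: completing the square,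
the Joseph form exceeds the update by `(L - K) (C S Cᴴ + R) (L - K)ᴴ ⪰ 0`, where
`K = S Cᴴ (C S Cᴴ + R)⁻¹` is the Kalman gain. So with `K'` the gain of `P'`, the update at `P` is
below the Joseph form at `(K', P)`, which is below the one at `(K', P')`, which is the update at
`P'`. Conjugating by `A` and adding `Q` preserve the Loewner order.
-/

open scoped MatrixOrder ComplexOrder

namespace Matrix

section Algebra

variable {α m n : Type*} [CommRing α] [StarRing α] [Fintype m] [Fintype n] [DecidableEq n]

def josephUpdate (C : Matrix m n α) (R : Matrix m m α) (L : Matrix n m α) (P : Matrix n n α) :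
    Matrix n n α :=
  (1 - L * C) * P * (1 - L * C)ᴴ + L * R * Lᴴ

theorem josephUpdate_sub_josephUpdate (C : Matrix m n α) (R : Matrix m m α) (L : Matrix n m α)
    (P P' : Matrix n n α) :
    josephUpdate C R L P' - josephUpdate C R L P = (1 - L * C) * (P' - P) * (1 - L * C)ᴴ := by
  simp only [josephUpdate, Matrix.mul_sub, Matrix.sub_mul]
  abel

variable [DecidableEq m]

noncomputable def kalmanGain (C : Matrix m n α) (R : Matrix m m α) (P : Matrix n n α) :
    Matrix n m α :=
  P * Cᴴ * (C * P * Cᴴ + R)⁻¹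

noncomputable def kalmanUpdate (C : Matrix m n α) (R : Matrix m m α) (P : Matrix n n α) :
    Matrix n n α :=
  P - P * Cᴴ * (C * P * Cᴴ + R)⁻¹ * (C * P)

theorem josephUpdate_eq_kalmanUpdate_add {C : Matrix m n α} {R : Matrix m m α}
    {P : Matrix n n α} (hP : P.IsHermitian) (hR : R.IsHermitian)
    (hM : IsUnit (C * P * Cᴴ + R)) (L : Matrix n m α) :
    josephUpdate C R L P = kalmanUpdate C R P +
      (L - kalmanGain C R P) * (C * P * Cᴴ + R) * (L - kalmanGain C R P)ᴴ := by
  set M := C * P * Cᴴ + R with hM_def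
  set K := kalmanGain C R P
  have hMh : Mᴴ = M := by
    simp only [hM_def, conjTranspose_add, conjTranspose_mul, conjTranspose_conjTranspose,
      hP.eq, hR.eq, Matrix.mul_assoc]
  have hdet : IsUnit M.det := (isUnit_iff_isUnit_det M).mp hM
  have hK : K = P * Cᴴ * M⁻¹ := rfl
  have hKM : K * M = P * Cᴴ := by
    rw [hK, Matrix.mul_assoc, nonsing_inv_mul M hdet, Matrix.mul_one]
  have hMK : M * Kᴴ = C * P := by
    rw [hK, conjTranspose_mul, conjTranspose_nonsing_inv, hMh, conjTranspose_mul,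
      conjTranspose_conjTranspose, hP.eq, ← Matrix.mul_assoc, mul_nonsing_inv M hdet,
      Matrix.one_mul]
  calc josephUpdate C R L P
      = P - L * (C * P) - P * Cᴴ * Lᴴ + L * M * Lᴴ := by
        simp only [josephUpdate, hM_def, conjTranspose_sub, conjTranspose_one, conjTranspose_mul,
          Matrix.mul_sub, Matrix.sub_mul, Matrix.mul_add, Matrix.add_mul, Matrix.mul_one,
          Matrix.one_mul, Matrix.mul_assoc]
        abel
    _ = kalmanUpdate C R P + (L - K) * M * (L - K)ᴴ := by
        simp only [conjTranspose_sub, Matrix.mul_sub, Matrix.sub_mul]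
        rw [Matrix.mul_assoc L M Kᴴ, Matrix.mul_assoc K M Kᴴ, hMK, hKM, hK, kalmanUpdate, ← hM_def]
        abel

theorem josephUpdate_kalmanGain {C : Matrix m n α} {R : Matrix m m α} {P : Matrix n n α}
    (hP : P.IsHermitian) (hR : R.IsHermitian) (hM : IsUnit (C * P * Cᴴ + R)) :
    josephUpdate C R (kalmanGain C R P) P = kalmanUpdate C R P := by
  simp [josephUpdate_eq_kalmanUpdate_add hP hR hM]

end Algebra

section LoewnerOrder

variable {𝕜 m n : Type*} [RCLike 𝕜] [Fintype m] [Fintype n]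
  {C : Matrix m n 𝕜} {R : Matrix m m 𝕜} {P P' : Matrix n n 𝕜}

theorem PosSemidef.mul_mul_conjTranspose_add_posDef (hP : P.PosSemidef) (hR : R.PosDef) :
    (C * P * Cᴴ + R).PosDef :=
  PosDef.posSemidef_add (hP.mul_mul_conjTranspose_same C) hR

variable [DecidableEq n]

theorem josephUpdate_mono (L : Matrix n m 𝕜) (h : P ≤ P') :
    josephUpdate C R L P ≤ josephUpdate C R L P' := by
  rw [le_iff, josephUpdate_sub_josephUpdate]
  exact (le_iff.mp h).mul_mul_conjTranspose_same _

variable [DecidableEq m]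

theorem kalmanUpdate_le_josephUpdate (hP : P.PosSemidef) (hR : R.PosDef) (L : Matrix n m 𝕜) :
    kalmanUpdate C R P ≤ josephUpdate C R L P := by
  have hM := hP.mul_mul_conjTranspose_add_posDef (C := C) hR
  rw [josephUpdate_eq_kalmanUpdate_add hP.isHermitian hR.isHermitian hM.isUnit]
  exact le_add_of_nonneg_right (hM.posSemidef.mul_mul_conjTranspose_same _).nonneg

theorem kalmanUpdate_mono (hP : P.PosSemidef) (hR : R.PosDef) (h : P ≤ P') :
    kalmanUpdate C R P ≤ kalmanUpdate C R P' := by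
  have hP' : P'.PosSemidef := (hP.nonneg.trans h).posSemidef
  calc kalmanUpdate C R P
      ≤ josephUpdate C R (kalmanGain C R P') P := kalmanUpdate_le_josephUpdate hP hR _
    _ ≤ josephUpdate C R (kalmanGain C R P') P' := josephUpdate_mono _ h
    _ = kalmanUpdate C R P' :=
        josephUpdate_kalmanGain hP'.isHermitian hR.isHermitian
          (hP'.mul_mul_conjTranspose_add_posDef hR).isUnit

end LoewnerOrder

end Matrix

theorem riccatiMap_eq_kalmanUpdate {n m : ℕ} (A Q : Matrix (Fin n) (Fin n) ℝ)
    (C : Matrix (Fin m) (Fin n) ℝ) (R : Matrix (Fin m) (Fin m) ℝ) (S : Matrix (Fin n) (Fin n) ℝ) :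
    riccatiMap A Q C R S = A * kalmanUpdate C R S * Aᴴ + Q := by
  simp only [riccatiMap, kalmanUpdate, conjTranspose_eq_transpose_of_trivial]

theorem riccatiMap_monotone_general {n m : ℕ}
    (P P' : Matrix (Fin n) (Fin n) ℝ)
    (R : Matrix (Fin m) (Fin m) ℝ)
    (C : Matrix (Fin m) (Fin n) ℝ)
    (A Q : Matrix (Fin n) (Fin n) ℝ)
    (hP : P.PosSemidef)
    (hle : (P' - P).PosSemidef)
    (hR : R.PosDef) :
    (riccatiMap A Q C R P' - riccatiMap A Q C R P).PosSemidef := by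
  rw [← le_iff, riccatiMap_eq_kalmanUpdate, riccatiMap_eq_kalmanUpdate]
  exact add_le_add_left (star_right_conjugate_le_conjugate (kalmanUpdate_mono hP hR hle) A) Q

/-- The one-step Riccati update is monotone with respect to the
Loewner order: if `P ⪯ P'` (both positive semidefinite), `R ≻ 0`, `Q ⪰ 0`,
then `f(P) ⪯ f(P')`. -/
theorem riccatiMap_monotone {n m : ℕ}
    (P P' : Matrix (Fin n) (Fin n) ℝ)
    (R : Matrix (Fin m) (Fin m) ℝ)
    (C : Matrix (Fin m) (Fin n) ℝ)
    (A Q : Matrix (Fin n) (Fin n) ℝ)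
    (hP : P.PosSemidef) (hP' : P'.PosSemidef)
    (hle : (P' - P).PosSemidef)
    (hR : R.PosDef) (hQ : Q.PosSemidef) :
    (riccatiMap A Q C R P' - riccatiMap A Q C R P).PosSemidef :=
  riccatiMap_monotone_general P P' R C A Q hP hle hR
end

section
/- (Lemma 4: uniformly bounded confidence set for Gaussian random vectors.) Fix n ≥ 1 and M ≥ 1, vectors a_1, …, a_M ∈ ℝⁿ, probabilities p_1, …, p_M ∈ (0, 1/2] with Σ_{m=1}^M p_m = p, and real numbers t_1, …, t_M with t_m ≥ 0 such that the cumulative distribution function of the standard real Gaussian measure satisfies cdf(t_m) = 1 − p_m. Let Σ be an n×n positive semidefinite matrix and define h̄_m = t_m · √(a_mᵀ Σ a_m). Then for every n×n positive semidefinite matrix Σ_k with Σ_k ⪯ Σ, the centered multivariate Gaussian measure with covariance Σ_k assigns probability at least 1 − p to the polytope {r ∈ ℝⁿ : a_mᵀ r ≤ h̄_m for all m = 1, …, M}. -/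
open MeasureTheory ProbabilityTheory Matrix
open scoped NNReal

/-!
Under `μ` the functional `r ↦ aₘᵀ r` is `N(0, aₘᵀ Vk aₘ)`, and `aₘᵀ Vk aₘ ≤ aₘᵀ V aₘ`.
Writing `N(0, v)` as the image of `N(0, 1)` under `x ↦ √v x`, the event `√v x > tₘ √(aₘᵀ V aₘ)`
forces `x > tₘ` because `tₘ ≥ 0`; so the `m`-th constraint fails with probability at most
`1 - cdf(tₘ) = pₘ`, and a union bound over the `M` constraints gives `1 - p`.
-/

theorem Matrix.dotProduct_mulVec_le_of_posSemidef_sub {n R : Type*} [Fintype n] [CommRing R]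
    [PartialOrder R] [IsOrderedAddMonoid R] [StarRing R] [TrivialStar R]
    {A B : Matrix n n R} (h : (B - A).PosSemidef) (x : n → R) :
    x ⬝ᵥ A *ᵥ x ≤ x ⬝ᵥ B *ᵥ x := by
  have := h.dotProduct_mulVec_nonneg x
  rwa [star_trivial, sub_mulVec, dotProduct_sub, sub_nonneg] at this

theorem measure_Ioi_eq_ofReal_one_sub_cdf (μ : Measure ℝ) [IsProbabilityMeasure μ] (x : ℝ) :
    μ (Set.Ioi x) = ENNReal.ofReal (1 - cdf μ x) := by
  rw [← Set.compl_Iic, prob_compl_eq_one_sub measurableSet_Iic, ← ofReal_cdf,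
    ENNReal.ofReal_sub 1 (cdf_nonneg μ x), ENNReal.ofReal_one]

theorem one_sub_sum_measure_compl_le_measure_iInter {α ι : Type*} [MeasurableSpace α] [Fintype ι]
    (μ : Measure α) [IsProbabilityMeasure μ] (s : ι → Set α) :
    1 - ∑ i, μ (s i)ᶜ ≤ μ (⋂ i, s i) := by
  rw [tsub_le_iff_right]
  calc 1 = μ Set.univ := measure_univ.symm
    _ ≤ μ (⋂ i, s i) + μ (⋂ i, s i)ᶜ := measure_univ_le_add_compl _
    _ ≤ μ (⋂ i, s i) + ∑ i, μ (s i)ᶜ := by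
      rw [Set.compl_iInter]
      gcongr
      exact measure_iUnion_fintype_le μ _

theorem gaussianReal_Ioi_mul_le {v : ℝ≥0} {s t : ℝ} (hvs : √(v : ℝ) ≤ s) (ht : 0 ≤ t) :
    gaussianReal 0 v (Set.Ioi (t * s)) ≤ gaussianReal 0 1 (Set.Ioi t) := by
  have hmap : (gaussianReal 0 1).map (√(v : ℝ) * ·) = gaussianReal 0 v := by
    rw [gaussianReal_map_const_mul, mul_zero, mul_one]
    congr 1
    ext
    simp
  rw [← hmap, Measure.map_apply (by fun_prop) measurableSet_Ioi]
  refine measure_mono fun x (hx : t * s < √(v : ℝ) * x) => ?_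
  have hv : 0 ≤ √(v : ℝ) := Real.sqrt_nonneg _
  show t < x
  by_contra! hxt
  nlinarith [mul_nonneg (sub_nonneg.2 hxt) hv, mul_nonneg ht (sub_nonneg.2 hvs)]

theorem measure_lt_dotProduct_le_of_map_eq_gaussianReal {n : Type*} [Fintype n]
    {μ : Measure (n → ℝ)} {V Vk : Matrix n n ℝ} (hle : (V - Vk).PosSemidef) {c : n → ℝ}
    (hc : μ.map (c ⬝ᵥ ·) = gaussianReal 0 (c ⬝ᵥ Vk *ᵥ c).toNNReal) {t : ℝ} (ht : 0 ≤ t) :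
    μ {r | t * √(c ⬝ᵥ V *ᵥ c) < c ⬝ᵥ r} ≤ ENNReal.ofReal (1 - cdf (gaussianReal 0 1) t) := by
  have hmeas : Measurable (c ⬝ᵥ · : (n → ℝ) → ℝ) := by
    simp only [dotProduct]
    fun_prop
  have hsd : √((c ⬝ᵥ Vk *ᵥ c).toNNReal : ℝ) ≤ √(c ⬝ᵥ V *ᵥ c) := by
    -- `Real.sqrt` is defined through `toNNReal`, so it absorbs the truncation.
    rw [Real.sqrt, Real.toNNReal_coe, ← Real.sqrt]
    exact Real.sqrt_le_sqrt (dotProduct_mulVec_le_of_posSemidef_sub hle c)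
  calc μ {r | t * √(c ⬝ᵥ V *ᵥ c) < c ⬝ᵥ r}
      = gaussianReal 0 (c ⬝ᵥ Vk *ᵥ c).toNNReal (Set.Ioi (t * √(c ⬝ᵥ V *ᵥ c))) := by
        rw [← hc, Measure.map_apply hmeas measurableSet_Ioi]
        rfl
    _ ≤ gaussianReal 0 1 (Set.Ioi t) := gaussianReal_Ioi_mul_le hsd ht
    _ = _ := measure_Ioi_eq_ofReal_one_sub_cdf _ t

theorem uniformly_bounded_confidence_set_general {n M : ℕ}
    (a : Fin M → Fin n → ℝ)
    (p : ℝ) (pm : Fin M → ℝ)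
    (hpm : ∀ m, pm m ∈ Set.Ioc (0 : ℝ) (1 / 2))
    (hsum : ∑ m, pm m = p)
    (t : Fin M → ℝ) (ht : ∀ m, 0 ≤ t m)
    (hcdf : ∀ m, cdf (gaussianReal 0 1) (t m) = 1 - pm m)
    (V : Matrix (Fin n) (Fin n) ℝ)
    (Vk : Matrix (Fin n) (Fin n) ℝ)
    (hle : (V - Vk).PosSemidef)
    (μ : Measure (Fin n → ℝ)) [IsProbabilityMeasure μ]
    (hGauss : ∀ c : Fin n → ℝ,
      μ.map (fun r => c ⬝ᵥ r) = gaussianReal 0 ((c ⬝ᵥ Vk.mulVec c).toNNReal)) :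
    μ {r : Fin n → ℝ |
        ∀ m : Fin M, a m ⬝ᵥ r ≤ t m * Real.sqrt (a m ⬝ᵥ V.mulVec (a m))}
      ≥ ENNReal.ofReal (1 - p) := by
  have htail (m : Fin M) :
      μ {r | a m ⬝ᵥ r ≤ t m * √(a m ⬝ᵥ V *ᵥ a m)}ᶜ ≤ ENNReal.ofReal (pm m) := by
    simpa only [Set.compl_ofPred, not_le, hcdf, sub_sub_cancel] using
      measure_lt_dotProduct_le_of_map_eq_gaussianReal hle (hGauss (a m)) (ht m)
  have hp0 : 0 ≤ p := hsum ▸ Finset.sum_nonneg fun m _ => (hpm m).1.le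
  have hp : ENNReal.ofReal p = ∑ m, ENNReal.ofReal (pm m) := by
    rw [← hsum, ENNReal.ofReal_sum_of_nonneg fun m _ => (hpm m).1.le]
  calc ENNReal.ofReal (1 - p)
      = 1 - ENNReal.ofReal p := by rw [ENNReal.ofReal_sub 1 hp0, ENNReal.ofReal_one]
    _ ≤ 1 - ∑ m, μ {r | a m ⬝ᵥ r ≤ t m * √(a m ⬝ᵥ V *ᵥ a m)}ᶜ := by
      rw [hp]
      gcongr with m
      exact htail m
    _ ≤ _ := by
      rw [Set.ofPred_forall]
      exact one_sub_sum_measure_compl_le_measure_iInter μ _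

/-- **Lemma 4: uniformly bounded confidence set for Gaussian
random vectors.**  Fix `n ≥ 1`, `M ≥ 1`, vectors `a_1, …, a_M ∈ ℝⁿ`,
probabilities `p_m ∈ (0, 1/2]` with `Σ_m p_m = p`, and `t_m ≥ 0` with
`cdf(t_m) = 1 − p_m` for the standard Gaussian cdf.  Let `V ⪰ 0` and set
`h̄_m = t_m √(a_mᵀ V a_m)`.  Then for every covariance `Vk ⪰ 0` with `Vk ⪯ V`,
the centered multivariate Gaussian measure `μ` with covariance `Vk` (i.e. the
measure on `ℝⁿ` under which every linear functional `r ↦ aᵀ r` is a real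
Gaussian with mean `0` and variance `aᵀ Vk a`) assigns probability at least
`1 − p` to the polytope `{r : aₘᵀ r ≤ h̄ₘ, m = 1, …, M}`. -/
theorem uniformly_bounded_confidence_set {n M : ℕ}
    (hn : 1 ≤ n) (hM : 1 ≤ M)
    (a : Fin M → Fin n → ℝ)
    (p : ℝ) (pm : Fin M → ℝ)
    (hpm : ∀ m, pm m ∈ Set.Ioc (0 : ℝ) (1 / 2))
    (hsum : ∑ m, pm m = p)
    (t : Fin M → ℝ) (ht : ∀ m, 0 ≤ t m)
    (hcdf : ∀ m, cdf (gaussianReal 0 1) (t m) = 1 - pm m)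
    (V : Matrix (Fin n) (Fin n) ℝ) (hV : V.PosSemidef)
    (Vk : Matrix (Fin n) (Fin n) ℝ) (hVk : Vk.PosSemidef)
    (hle : (V - Vk).PosSemidef)
    (μ : Measure (Fin n → ℝ)) [IsProbabilityMeasure μ]
    (hGauss : ∀ c : Fin n → ℝ,
      μ.map (fun r => c ⬝ᵥ r) = gaussianReal 0 ((c ⬝ᵥ Vk.mulVec c).toNNReal)) :
    μ {r : Fin n → ℝ |
        ∀ m : Fin M, a m ⬝ᵥ r ≤ t m * Real.sqrt (a m ⬝ᵥ V.mulVec (a m))}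
      ≥ ENNReal.ofReal (1 - p) :=
  uniformly_bounded_confidence_set_general a p pm hpm hsum t ht hcdf V Vk hle μ hGauss
end

section
/- (Terminal set invariance propagation, eq. (24).) Let E, X_f ⊆ ℝ^{n_x} be sets, A_cl an n_x×n_x matrix, N ≥ 1, and x̄ ∈ ℝ^{n_x}. Assume: (H1) for every choice of n_0, …, n_{N−1} ∈ E, x̄ + Σ_{q=0}^{N−1} A_cl^q n_q ∈ X_f; and (RPI) X_f is robust positively invariant for the dynamics x ↦ A_cl x + n with n ∈ E, i.e., for every x ∈ X_f and every n ∈ E, A_cl x + n ∈ X_f. Then for every ñ ∈ E and every choice of n_0, …, n_{N−1} ∈ E, A_cl (x̄ + A_cl^{N−1} ñ) + Σ_{q=0}^{N−1} A_cl^q n_q ∈ X_f. -/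
open Matrix

/-- **terminal set invariance propagation, eq. (24).**
Assume (H1): `x̄ + Σ_{q=0}^{N−1} A_cl^q n_q ∈ X_f` for every `n_0, …, n_{N−1} ∈ E`
(i.e. `x̄ ∈ X_f ⊖ ⊕_{q=0}^{N−1} A_cl^q E`), and (RPI): `X_f` is robust positively
invariant for `x ↦ A_cl x + n`, `n ∈ E`.  Then for every `ñ ∈ E` and every
`n_0, …, n_{N−1} ∈ E`,
`A_cl (x̄ + A_cl^{N−1} ñ) + Σ_{q=0}^{N−1} A_cl^q n_q ∈ X_f`
(i.e. `A_cl(x̄ + A_cl^{N−1} ñ) ∈ X_f ⊖ ⊕_{q=0}^{N−1} A_cl^q E`). -/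
theorem terminal_set_invariance {nx : ℕ}
    (E Xf : Set (Fin nx → ℝ))
    (Acl : Matrix (Fin nx) (Fin nx) ℝ)
    (N : ℕ) (hN : 1 ≤ N) (xbar : Fin nx → ℝ)
    (h1 : ∀ ns : ℕ → Fin nx → ℝ, (∀ q < N, ns q ∈ E) →
      xbar + ∑ q ∈ Finset.range N, (Acl ^ q).mulVec (ns q) ∈ Xf)
    (hRPI : ∀ x ∈ Xf, ∀ nn ∈ E, Acl.mulVec x + nn ∈ Xf) :
    ∀ ntil ∈ E, ∀ ns : ℕ → Fin nx → ℝ, (∀ q < N, ns q ∈ E) →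
      Acl.mulVec (xbar + (Acl ^ (N - 1)).mulVec ntil)
        + ∑ q ∈ Finset.range N, (Acl ^ q).mulVec (ns q) ∈ Xf := by
  intro ntil hntil ns hns
  obtain ⟨M, rfl⟩ : ∃ M, N = M + 1 := ⟨N - 1, (Nat.succ_pred_eq_of_pos hN).symm⟩
  set ms : ℕ → Fin nx → ℝ := fun q => if q = M then ntil else ns (q + 1) with hms
  have hmsE : ∀ q < M + 1, ms q ∈ E := by
    intro q hq
    simp only [hms]
    split
    · exact hntil
    · exact hns (q + 1) (by omega)
  have hx := hRPI _ (h1 ms hmsE) (ns 0) (hns 0 (by omega))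
  have key : Acl.mulVec (xbar + ∑ q ∈ Finset.range (M + 1), (Acl ^ q).mulVec (ms q)) + ns 0
      = Acl.mulVec (xbar + (Acl ^ (M + 1 - 1)).mulVec ntil)
        + ∑ q ∈ Finset.range (M + 1), (Acl ^ q).mulVec (ns q) := by
    rw [Finset.sum_range_succ, Finset.sum_range_succ']
    simp only [hms, if_pos rfl, pow_zero, Matrix.one_mulVec, Nat.add_sub_cancel]
    have hsum : ∀ q ∈ Finset.range M, (Acl ^ q).mulVec (if q = M then ntil else ns (q+1))
        = (Acl ^ q).mulVec (ns (q+1)) := by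
      intro q hq
      rw [if_neg (Nat.ne_of_lt (Finset.mem_range.mp hq))]
    rw [Finset.sum_congr rfl hsum]
    have msum : Acl.mulVec (∑ q ∈ Finset.range M, (Acl ^ q).mulVec (ns (q+1)) + (Acl ^ M).mulVec ntil)
        = ∑ q ∈ Finset.range M, (Acl ^ (q+1)).mulVec (ns (q+1)) + (Acl ^ (M+1)).mulVec ntil := by
      rw [Matrix.mulVec_add]
      simp only [← Matrix.mulVecLin_apply, map_sum]
      simp only [Matrix.mulVecLin_apply, Matrix.mulVec_mulVec, ← pow_succ']
    rw [Matrix.mulVec_add, msum, Matrix.mulVec_add, Matrix.mulVec_mulVec, ← pow_succ']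
    abel
  rwa [key] at hx
end
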